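/- arXiv:1405.2945 — 4 statements merged into one kernel-verified Lean document; each statement's English description precedes it below -/
import Mathlib

section
/- Let K be a field and M an m × n matrix over K. Let r_1 < r_2 < ... < r_k be row indices and c_1 > c_2 > ... > c_k be column indices, and set X = {(r_1,c_1), ..., (r_k,c_k)} (an antidiagonal). Let T ⊆ {1, ..., k} be nonempty, let A = {(r_t, c_t) : t ∈ T}, let p = max{r_t : t ∈ T} and q = max{c_t : t ∈ T}. If the submatrix of M on rows 1, ..., p and columns 1, ..., q has rank at most |T| − 1, then the determinant of the k × k submatrix of M on rows r_1, ..., r_k and columns c_k, ..., c_1 equals 0. -/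
/-!
Let `N` be the `k × k` submatrix in question, with `a = max T` and `b = min T`, and suppose
`det N ≠ 0`. In an invertible `k × k` matrix any `I × J` submatrix has rank at least
`|I| + |J| - k`: the rows in `I` are independent, and deleting the columns outside `J` loses
at most `k - |J|` of rank. The `(a + 1) × (k - b)` northwest corner of `N` lies inside the
northwest block of `M` cut off at `(p, q)`, so its rank is at most `|T| - 1`, whereas the
bound gives at least `a + 1 - b ≥ |T|`.
-/

open Finset

namespace Matrix

variable {K : Type*} [Field K]

theorem rank_le_rank_submatrix_add_card_compl {m n : Type*} [Finite m] [Fintype n]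
    [DecidableEq n] (A : Matrix m n K) (s : Finset n) :
    A.rank ≤ (A.submatrix id ((↑) : s → n)).rank + #sᶜ := by
  set A₁ := A.submatrix id ((↑) : s → n)
  set A₂ := A.submatrix id ((↑) : ↥(sᶜ) → n)
  have hcols : Set.range A.col ⊆ Set.range A₁.col ∪ Set.range A₂.col := by
    rintro _ ⟨j, rfl⟩
    by_cases hj : j ∈ s
    · exact Or.inl ⟨⟨j, hj⟩, rfl⟩
    · exact Or.inr ⟨⟨j, mem_compl.mpr hj⟩, rfl⟩
  rw [rank_eq_finrank_span_cols, rank_eq_finrank_span_cols]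
  calc Module.finrank K (Submodule.span K (Set.range A.col))
      ≤ Module.finrank K
          ↥(Submodule.span K (Set.range A₁.col) ⊔ Submodule.span K (Set.range A₂.col)) :=
        Submodule.finrank_mono <| (Submodule.span_mono hcols).trans (Submodule.span_union _ _).le
    _ ≤ Module.finrank K (Submodule.span K (Set.range A₁.col))
          + Module.finrank K (Submodule.span K (Set.range A₂.col)) :=
        Submodule.finrank_add_le_finrank_add_finrank _ _
    _ ≤ Module.finrank K (Submodule.span K (Set.range A₁.col)) + #sᶜ := by
        gcongr
        exact (finrank_range_le_card A₂.col).trans (Fintype.card_coe _).le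

theorem card_add_card_le_rank_submatrix_add_card {ι : Type*} [Fintype ι] [DecidableEq ι]
    (N : Matrix ι ι K) (hN : IsUnit N.det) (I J : Finset ι) :
    #I + #J ≤ (N.submatrix ((↑) : I → ι) ((↑) : J → ι)).rank + Fintype.card ι := by
  have hrows : (N.submatrix ((↑) : I → ι) id).rank = #I := by
    rw [LinearIndependent.rank_matrix, Fintype.card_coe]
    exact (linearIndependent_rows_of_isUnit ((isUnit_iff_isUnit_det N).mpr hN)).comp _
      Subtype.val_injective
  have hcols := rank_le_rank_submatrix_add_card_compl (N.submatrix ((↑) : I → ι) id) J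
  rw [hrows, card_compl, submatrix_submatrix, Function.comp_id, Function.id_comp] at hcols
  have hJ : #J ≤ Fintype.card ι := card_le_univ J
  omega

end Matrix

open Matrix

/-- Let `K` be a field and `M` an `m × n` matrix over `K`.  Let
`r 0 < r 1 < ⋯ < r (k-1)` be row indices and `c 0 > c 1 > ⋯ > c (k-1)` be column indices,
so that `X = {(r t, c t)}` is an antidiagonal.  Let `T` be a nonempty subset of `Fin k`,
giving the sub-antidiagonal `A = {(r t, c t) : t ∈ T}`; let `p = max {r t : t ∈ T}` and
`q = max {c t : t ∈ T}`.  If the northwest submatrix of `M` on rows `≤ p` and columns `≤ q`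
has rank at most `|T| - 1`, then the determinant of the `k × k` submatrix of `M` on rows
`r 0, …, r (k-1)` and columns `c (k-1), …, c 0` (i.e. the columns listed in increasing
order) vanishes. -/
theorem det_eq_zero_of_nw_rank_lt {K : Type*} [Field K] {m n k : ℕ}
    (M : Matrix (Fin m) (Fin n) K)
    (r : Fin k → Fin m) (c : Fin k → Fin n)
    (hr : StrictMono r) (hc : StrictAnti c)
    (T : Finset (Fin k)) (hT : T.Nonempty)
    (hrank :
      (Matrix.of fun (a : {a : Fin m // a ≤ T.sup' hT r}) (b : {b : Fin n // b ≤ T.sup' hT c}) =>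
          M a.1 b.1).rank ≤ T.card - 1) :
    (M.submatrix r (fun t => c t.rev)).det = 0 := by
  by_contra hdet
  set N := M.submatrix r (fun t : Fin k => c t.rev)
  set a := T.max' hT
  set b := T.min' hT
  have hlower := card_add_card_le_rank_submatrix_add_card N (isUnit_iff_ne_zero.mpr hdet)
    (Iic a) (Iic b.rev)
  have hupper :
      (N.submatrix ((↑) : Iic a → Fin k) ((↑) : Iic b.rev → Fin k)).rank ≤ #T - 1 := by
    refine (congrArg rank ?_).trans_le <| (rank_submatrix_le _
      (fun i => ⟨r i, (hr.monotone (mem_Iic.mp i.2)).trans (le_sup' r (T.max'_mem hT))⟩)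
      (fun j => ⟨c j.1.rev, (hc.antitone (Fin.le_rev_iff.mp (mem_Iic.mp j.2))).trans
        (le_sup' c (T.min'_mem hT))⟩)).trans hrank
    rfl
  have hT_card : #T ≤ #(Icc b a) :=
    card_le_card fun t ht => mem_Icc.mpr ⟨T.min'_le t ht, T.le_max' t ht⟩
  have hT_pos : 0 < #T := card_pos.mpr hT
  rw [Fin.card_Icc] at hT_card
  rw [Fin.card_Iic, Fin.card_Iic, Fin.val_rev, Fintype.card_fin] at hlower
  omega
end

section
/- Let K be an algebraically closed field and let R = K[m_{a,b} : 1 ≤ a,b ≤ n] be the polynomial ring whose variables are the entries of the generic n × n matrix. Let I_A and I_B be radical ideals of R given by northwest rank conditions. Let A and B be antidiagonals such that det(A) is a Fulton generator of I_A (i.e., for some defining triple (i,j,k) of I_A one has |A| = k and A ⊆ {1,...,i} × {1,...,j}) and det(B) is a Fulton generator of I_B in the same sense. If X = A ∪ B is again an antidiagonal and A ∩ B ≠ ∅, then det(X) ∈ I_A ∩ I_B. -/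
open MvPolynomial

/-- The generic `n × n` matrix, whose `(a,b)` entry is the variable `m_{a,b}` of
`K[m_{a,b} : 1 ≤ a,b ≤ n]`. -/
noncomputable def genericMatrix (n : ℕ) (K : Type*) [CommSemiring K] :
    Matrix (Fin n) (Fin n) (MvPolynomial (Fin n × Fin n) K) :=
  Matrix.of fun a b => X (a, b)

/-- For an antidiagonal given by strictly increasing rows `r` and strictly decreasing
columns `c`, `antidiagDet n K r c` is the determinant of the `k × k` submatrix of the
generic matrix on rows `r 0, …, r (k-1)` and columns `c (k-1), …, c 0` (columns listed in
increasing order). -/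
noncomputable def antidiagDet (n : ℕ) (K : Type*) [CommRing K] {k : ℕ}
    (r c : Fin k → Fin n) : MvPolynomial (Fin n × Fin n) K :=
  ((genericMatrix n K).submatrix r (fun t => c t.rev)).det

/-- The set of all `k × k` minors of the northwest `i × j` submatrix of the generic
`n × n` matrix (rows `1..i`, columns `1..j`). -/
def nwMinors (n : ℕ) (K : Type*) [CommRing K] (i j k : ℕ) :
    Set (MvPolynomial (Fin n × Fin n) K) :=
  { f | ∃ r c : Fin k → Fin n, StrictMono r ∧ StrictMono c ∧
      (∀ t, (r t : ℕ) < i) ∧ (∀ t, (c t : ℕ) < j) ∧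
      f = ((genericMatrix n K).submatrix r c).det }

/-- The ideal given by the northwest rank conditions recorded in a finite set `S` of
triples `(i, j, k)`: it is generated by all `k × k` minors of the northwest `i × j`
submatrix of the generic matrix, over all `(i,j,k) ∈ S`. -/
noncomputable def nwIdeal (n : ℕ) (K : Type*) [CommRing K] (S : Finset (ℕ × ℕ × ℕ)) :
    Ideal (MvPolynomial (Fin n × Fin n) K) :=
  Ideal.span (⋃ s ∈ S, nwMinors n K s.1 s.2.1 s.2.2)

/-!
By the Nullstellensatz and radicality it suffices that `det X` vanishes at every matrix `N`
whose northwest `i × j` block has rank `< k`. Let `P` and `Q` be the cells of `X` in rows `< i`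
and in columns `< j`. As `X` is an antidiagonal containing a cell of `A`, which lies in both,
every cell of `X` is in `P` or in `Q`, and `|P ∩ Q| ≥ |A| = k`. The `P × Q` block of the square
submatrix of `N` on `X` lies inside the northwest block, so that submatrix has rank at most
`(k - 1) + (|X| - |P|) + (|X| - |Q|) < |X|`, and its determinant vanishes.
-/

open Module Submodule Matrix Finset

theorem exists_linearIndependent_comp_of_le_finrank {K V ι : Type*} [Field K] [AddCommGroup V]
    [Module K V] [Finite ι] (f : ι → V) {k : ℕ} (h : k ≤ finrank K (span K (Set.range f))) :
    ∃ g : Fin k → ι, LinearIndependent K (f ∘ g) := by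
  have := Module.Finite.span_of_finite K (Set.finite_range f)
  obtain ⟨v, hv, -, hli⟩ := exists_fun_fin_finrank_span_eq K (Set.range f)
  choose g hg using hv
  refine ⟨g ∘ Fin.castLE h, ?_⟩
  rw [← Function.comp_assoc, show f ∘ g = v from funext hg]
  exact hli.comp _ (Fin.castLE_injective h)

namespace Matrix

variable {K p q : Type*} [Field K] [Fintype p] [Fintype q]

theorem exists_det_submatrix_ne_zero_of_le_rank (W : Matrix p q K) {k : ℕ} (h : k ≤ W.rank) :
    ∃ (r : Fin k → p) (c : Fin k → q), (W.submatrix r c).det ≠ 0 := by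
  rw [rank_eq_finrank_span_cols] at h
  obtain ⟨c, hc⟩ := exists_linearIndependent_comp_of_le_finrank W.col h
  have hrank : (W.submatrix id c).rank = k := by
    rw [← rank_transpose, LinearIndependent.rank_matrix (M := (W.submatrix id c)ᵀ) hc,
      Fintype.card_fin]
  obtain ⟨r, hr⟩ := exists_linearIndependent_comp_of_le_finrank (W.submatrix id c).row
    (hrank.ge.trans_eq (rank_eq_finrank_span_row _))
  exact ⟨r, c, ((isUnit_iff_isUnit_det _).1 (linearIndependent_rows_iff_isUnit.1 hr)).ne_zero⟩

theorem rank_lt_of_forall_strictMono_det_submatrix_eq_zero [LinearOrder p] [LinearOrder q]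
    (W : Matrix p q K) {k : ℕ}
    (h : ∀ (r : Fin k → p) (c : Fin k → q), StrictMono r → StrictMono c →
      (W.submatrix r c).det = 0) :
    W.rank < k := by
  by_contra! hk
  obtain ⟨r, c, hdet⟩ := W.exists_det_submatrix_ne_zero_of_le_rank hk
  have hr : Function.Injective r := fun a b hab => by
    by_contra hne
    exact hdet (det_zero_of_row_eq hne (funext fun _ => by simp [hab]))
  have hc : Function.Injective c := fun a b hab => by
    by_contra hne
    exact hdet (det_zero_of_column_eq hne fun _ => by simp [hab])
  set σ := Tuple.sort r
  set τ := Tuple.sort c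
  have hsort : (W.submatrix (r ∘ σ) (c ∘ τ)).det =
      Equiv.Perm.sign τ * (Equiv.Perm.sign σ * (W.submatrix r c).det) := by
    rw [← det_permute, ← det_permute']
    rfl
  refine hdet ?_
  have h0 := h _ _ ((Tuple.monotone_sort r).strictMono_of_injective (hr.comp σ.injective))
    ((Tuple.monotone_sort c).strictMono_of_injective (hc.comp τ.injective))
  have hsign : ∀ s : ℤˣ, ((s : ℤ) : K) ≠ 0 := fun s => by
    rcases Int.units_eq_one_or s with rfl | rfl <;> simp
  rw [hsort] at h0
  simpa [hsign] using h0

theorem rank_le_rank_submatrix_cols_add_card_compl [DecidableEq q] (A : Matrix p q K)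
    (Q : Finset q) :
    A.rank ≤ (A.submatrix id ((↑) : Q → q)).rank + #Qᶜ := by
  rw [rank_eq_finrank_span_cols, rank_eq_finrank_span_cols]
  calc finrank K (span K (Set.range A.col))
      ≤ finrank K ↥(span K (Set.range (A.submatrix id ((↑) : Q → q)).col) ⊔
          span K (Set.range (A.submatrix id ((↑) : ↥Qᶜ → q)).col)) := by
        refine Submodule.finrank_mono (span_le.2 ?_)
        rintro _ ⟨u, rfl⟩
        by_cases hu : u ∈ Q
        · exact mem_sup_left (subset_span ⟨⟨u, hu⟩, rfl⟩)
        · exact mem_sup_right (subset_span ⟨⟨u, mem_compl.2 hu⟩, rfl⟩)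
    _ ≤ _ := Submodule.finrank_add_le_finrank_add_finrank _ _
    _ ≤ _ := by
        gcongr
        exact (finrank_range_le_card _).trans_eq (Fintype.card_coe _)

variable [DecidableEq p] [DecidableEq q]

theorem rank_le_rank_submatrix_add_card_compl_s2 (A : Matrix p q K) (P : Finset p) (Q : Finset q) :
    A.rank ≤ (A.submatrix ((↑) : P → p) ((↑) : Q → q)).rank + #Pᶜ + #Qᶜ := by
  have hrows := rank_le_rank_submatrix_cols_add_card_compl (A.submatrix id ((↑) : Q → q))ᵀ P
  rw [rank_transpose, ← transpose_submatrix, rank_transpose, submatrix_submatrix] at hrows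
  exact (A.rank_le_rank_submatrix_cols_add_card_compl Q).trans (by simpa using hrows)

theorem det_eq_zero_of_rank_submatrix_add_card_compl_lt (M : Matrix p p K) (P Q : Finset p)
    (h : (M.submatrix ((↑) : P → p) ((↑) : Q → p)).rank + #Pᶜ + #Qᶜ < Fintype.card p) :
    M.det = 0 := by
  by_contra hdet
  have := M.rank_le_rank_submatrix_add_card_compl_s2 P Q
  rw [M.rank_of_det_ne_zero hdet] at this
  omega

end Matrix

theorem card_filter_add_card_filter_of_monotone_antitone {ι α : Type*} [Fintype ι]
    [LinearOrder ι] [Preorder α] [DecidableLT α] {r c : ι → α} (hr : Monotone r)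
    (hc : Antitone c) {i j : α}
    (h : ∃ u, r u < i ∧ c u < j) :
    #{u | r u < i} + #{u | c u < j} = Fintype.card ι + #{u | r u < i ∧ c u < j} := by
  obtain ⟨u₀, hr₀, hc₀⟩ := h
  have hcover : filter (fun u => r u < i) univ ∪ filter (fun u => c u < j) univ = univ :=
    eq_univ_of_forall fun u => by
      rcases le_total u u₀ with hu | hu
      · exact mem_union_left _ (mem_filter.2 ⟨mem_univ _, (hr hu).trans_lt hr₀⟩)
      · exact mem_union_right _ (mem_filter.2 ⟨mem_univ _, (hc hu).trans_lt hc₀⟩)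
  rw [← card_union_add_card_inter, hcover, card_univ, filter_and]

section Antidiagonal

variable {K : Type*} [Field K] {n : ℕ}

def nwBlock (N : Matrix (Fin n) (Fin n) K) (i j : ℕ) :
    Matrix {a : Fin n // (a : ℕ) < i} {b : Fin n // (b : ℕ) < j} K :=
  N.submatrix Subtype.val Subtype.val

theorem rank_nwBlock_lt (N : Matrix (Fin n) (Fin n) K) {i j k : ℕ}
    (h : ∀ r c : Fin k → Fin n, StrictMono r → StrictMono c →
      (∀ t, (r t : ℕ) < i) → (∀ t, (c t : ℕ) < j) → (N.submatrix r c).det = 0) :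
    (nwBlock N i j).rank < k :=
  rank_lt_of_forall_strictMono_det_submatrix_eq_zero _ fun r c hr hc =>
    h _ _ ((Subtype.strictMono_coe _).comp hr) ((Subtype.strictMono_coe _).comp hc)
      (fun t => (r t).2) (fun t => (c t).2)

theorem det_submatrix_antidiagonal_eq_zero (N : Matrix (Fin n) (Fin n) K) {i j k m : ℕ}
    (hN : (nwBlock N i j).rank < k) (rX cX : Fin m → Fin n) (hrX : Monotone rX)
    (hcX : Antitone cX) (hk : k ≤ #{u | (rX u : ℕ) < i ∧ (cX u : ℕ) < j}) :
    (N.submatrix rX fun u => cX u.rev).det = 0 := by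
  set P : Finset (Fin m) := {u | (rX u : ℕ) < i}
  set Q : Finset (Fin m) := {u | (cX u.rev : ℕ) < j}
  have hblock :
      (N.submatrix rX fun u => cX u.rev).submatrix ((↑) : P → Fin m) ((↑) : Q → Fin m) =
      (nwBlock N i j).submatrix (fun u : P => ⟨rX u, (mem_filter.1 u.2).2⟩)
        (fun u : Q => ⟨cX (u : Fin m).rev, (mem_filter.1 u.2).2⟩) := rfl
  have hQ : #Q = #{u | (cX u : ℕ) < j} := card_equiv Fin.revPerm (by simp [Q])
  have hcount : #P + #Q = m + #{u | (rX u : ℕ) < i ∧ (cX u : ℕ) < j} := by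
    rw [hQ]
    simpa using card_filter_add_card_filter_of_monotone_antitone (i := i) (j := j)
      (Fin.val_strictMono.monotone.comp hrX) (Fin.val_strictMono.monotone.comp_antitone hcX)
      (by simpa [Finset.Nonempty] using card_pos.1 ((Nat.zero_lt_of_lt hN).trans_le hk))
  apply det_eq_zero_of_rank_submatrix_add_card_compl_lt _ P Q
  have hsub := rank_submatrix_le (nwBlock N i j) (fun u : P => ⟨rX u, (mem_filter.1 u.2).2⟩)
    (fun u : Q => ⟨cX (u : Fin m).rev, (mem_filter.1 u.2).2⟩)
  rw [hblock, card_compl, card_compl, Fintype.card_fin]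
  have hPm := card_le_univ P
  have hQm := card_le_univ Q
  rw [Fintype.card_fin] at hPm hQm
  omega

end Antidiagonal

section Nullstellensatz

variable {K : Type*} [Field K] {n : ℕ}

theorem eval_det_submatrix_genericMatrix (x : Fin n × Fin n → K) {k : ℕ}
    (r c : Fin k → Fin n) :
    eval x ((genericMatrix n K).submatrix r c).det =
      ((Matrix.of fun a b => x (a, b)).submatrix r c).det := by
  rw [RingHom.map_det]
  congr 1
  ext
  simp [genericMatrix]

theorem rank_nwBlock_lt_of_mem_zeroLocus {S : Finset (ℕ × ℕ × ℕ)} {x : Fin n × Fin n → K}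
    (hx : x ∈ zeroLocus K (nwIdeal n K S)) {i j k : ℕ} (hs : (i, j, k) ∈ S) :
    (nwBlock (Matrix.of fun a b => x (a, b)) i j).rank < k :=
  rank_nwBlock_lt _ fun r c hr hc hri hcj => by
    rw [← eval_det_submatrix_genericMatrix, ← aeval_eq_eval]
    exact hx _ (Ideal.subset_span (Set.mem_biUnion hs ⟨r, c, hr, hc, hri, hcj, rfl⟩))

theorem antidiagDet_mem_nwIdeal [IsAlgClosed K] {S : Finset (ℕ × ℕ × ℕ)}
    (hrad : (nwIdeal n K S).IsRadical) {i j k m : ℕ} (hs : (i, j, k) ∈ S)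
    (rA cA : Fin k → Fin n) (hrA : Function.Injective rA)
    (hA : ∀ t, (rA t : ℕ) < i ∧ (cA t : ℕ) < j)
    (rX cX : Fin m → Fin n) (hrX : Monotone rX) (hcX : Antitone cX)
    (hAX : Set.range (fun t => (rA t, cA t)) ⊆ Set.range fun u => (rX u, cX u)) :
    antidiagDet n K rX cX ∈ nwIdeal n K S := by
  choose g hg using fun t => hAX ⟨t, rfl⟩
  simp only [Prod.ext_iff] at hg
  have hcells : k ≤ #{u | (rX u : ℕ) < i ∧ (cX u : ℕ) < j} := by
    simpa using card_le_card_of_injOn (s := univ)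
      (t := {u | (rX u : ℕ) < i ∧ (cX u : ℕ) < j}) g
      (fun t _ => by simpa [(hg t).1, (hg t).2] using hA t)
      fun a _ b _ hab => hrA (by rw [← (hg a).1, ← (hg b).1, hab])
  rw [← hrad.radical, ← vanishingIdeal_zeroLocus_eq_radical (K := K)]
  intro x hx
  rw [aeval_eq_eval, antidiagDet, eval_det_submatrix_genericMatrix]
  exact det_submatrix_antidiagonal_eq_zero _ (rank_nwBlock_lt_of_mem_zeroLocus hx hs)
    rX cX hrX hcX hcells

end Nullstellensatz

theorem antidiagDet_union_mem_inf_general {K : Type*} [Field K] [IsAlgClosed K] {n : ℕ}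
    (IA IB : Ideal (MvPolynomial (Fin n × Fin n) K))
    (SA SB : Finset (ℕ × ℕ × ℕ))
    (hIA : IA = nwIdeal n K SA) (hIB : IB = nwIdeal n K SB)
    (hradA : IA.IsRadical) (hradB : IB.IsRadical)
    {kA kB kX : ℕ}
    (rA cA : Fin kA → Fin n) (rB cB : Fin kB → Fin n) (rX cX : Fin kX → Fin n)
    (hrA : StrictMono rA)
    (hrB : StrictMono rB)
    (hrX : StrictMono rX) (hcX : StrictAnti cX)
    -- `det A` is a Fulton generator of `I_A`: for some defining triple `(i,j,k) ∈ SA`,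
    -- `|A| = k` and `A ⊆ {1,…,i} × {1,…,j}`:
    (hAgen : ∃ s ∈ SA, kA = s.2.2 ∧ ∀ t, (rA t : ℕ) < s.1 ∧ (cA t : ℕ) < s.2.1)
    (hBgen : ∃ s ∈ SB, kB = s.2.2 ∧ ∀ t, (rB t : ℕ) < s.1 ∧ (cB t : ℕ) < s.2.1)
    -- `X = A ∪ B` as sets of cells:
    (hunion : Set.range (fun t => (rX t, cX t)) =
      Set.range (fun t => (rA t, cA t)) ∪ Set.range (fun t => (rB t, cB t))) :
    antidiagDet n K rX cX ∈ IA ⊓ IB := by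
  subst hIA hIB
  obtain ⟨⟨iA, jA, _⟩, hsA, rfl, hA⟩ := hAgen
  obtain ⟨⟨iB, jB, _⟩, hsB, rfl, hB⟩ := hBgen
  exact ⟨antidiagDet_mem_nwIdeal hradA hsA rA cA hrA.injective hA rX cX hrX.monotone
      hcX.antitone (hunion ▸ Set.subset_union_left),
    antidiagDet_mem_nwIdeal hradB hsB rB cB hrB.injective hB rX cX hrX.monotone
      hcX.antitone (hunion ▸ Set.subset_union_right)⟩

/-- Let `K` be an algebraically closed field, and let `I_A` and `I_B` be
radical ideals of `K[m_{a,b}]` given by northwest rank conditions (with defining triple sets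
`SA`, `SB` of positive integers).  Let `A` (given by `rA`, `cA`) and `B` (given by `rB, cB`)
be antidiagonals such that `det A` is a Fulton generator of `I_A` and `det B` is a Fulton
generator of `I_B`.  If the union `X = A ∪ B` of the cell sets is again an antidiagonal
(given by `rX, cX`) and `A ∩ B ≠ ∅`, then `det X ∈ I_A ∩ I_B`. -/
theorem antidiagDet_union_mem_inf {K : Type*} [Field K] [IsAlgClosed K] {n : ℕ}
    (IA IB : Ideal (MvPolynomial (Fin n × Fin n) K))
    (SA SB : Finset (ℕ × ℕ × ℕ))
    (hSA : ∀ s ∈ SA, 0 < s.1 ∧ 0 < s.2.1 ∧ 0 < s.2.2)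
    (hSB : ∀ s ∈ SB, 0 < s.1 ∧ 0 < s.2.1 ∧ 0 < s.2.2)
    (hIA : IA = nwIdeal n K SA) (hIB : IB = nwIdeal n K SB)
    (hradA : IA.IsRadical) (hradB : IB.IsRadical)
    {kA kB kX : ℕ}
    (rA cA : Fin kA → Fin n) (rB cB : Fin kB → Fin n) (rX cX : Fin kX → Fin n)
    (hrA : StrictMono rA) (hcA : StrictAnti cA)
    (hrB : StrictMono rB) (hcB : StrictAnti cB)
    (hrX : StrictMono rX) (hcX : StrictAnti cX)
    -- `det A` is a Fulton generator of `I_A`: for some defining triple `(i,j,k) ∈ SA`,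
    -- `|A| = k` and `A ⊆ {1,…,i} × {1,…,j}`:
    (hAgen : ∃ s ∈ SA, kA = s.2.2 ∧ ∀ t, (rA t : ℕ) < s.1 ∧ (cA t : ℕ) < s.2.1)
    (hBgen : ∃ s ∈ SB, kB = s.2.2 ∧ ∀ t, (rB t : ℕ) < s.1 ∧ (cB t : ℕ) < s.2.1)
    -- `X = A ∪ B` as sets of cells:
    (hunion : Set.range (fun t => (rX t, cX t)) =
      Set.range (fun t => (rA t, cA t)) ∪ Set.range (fun t => (rB t, cB t)))
    -- `A ∩ B ≠ ∅`:
    (hmeet : (Set.range (fun t => (rA t, cA t)) ∩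
      Set.range (fun t => (rB t, cB t))).Nonempty) :
    antidiagDet n K rX cX ∈ IA ⊓ IB :=
  antidiagDet_union_mem_inf_general IA IB SA SB hIA hIB hradA hradB rA cA rB cB rX cX hrA hrB hrX
    hcX hAgen hBgen hunion
end

section
/- Let K be a field, I an ideal of R = K[m_{a,b} : 1 ≤ a,b ≤ n] given by northwest rank conditions, and (i,j,k) one of its defining triples, so that I contains all k × k minors of the northwest i × j submatrix of the generic matrix. Let A ⊆ {1,...,i} × {1,...,j} be an antidiagonal with |A| = k. Let S be any antidiagonal that contains a subset B with |B| = k which is weakly northwest of A, meaning that when the cells of B and of A are listed in order (rows increasing, columns decreasing), the t-th cell of B has row index at most the row index and column index at most the column index of the t-th cell of A. Then the polynomial det(S) vanishes at every matrix M ∈ K^{n×n} at which all elements of I vanish. -/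
/-! If `det S` did not vanish at `M`, the submatrix of `M` on the rows and columns of `S` would be
invertible. Its rows up to the last cell of `B` and its columns from the first cell of `B` on form
a `p × q` block with `p + q ≥ |S| + k`, since `B` has `k` cells between those two; the block lies
in the northwest `i × j` corner because `B` is weakly northwest of `A`. A `p × q` block of an
invertible `|S| × |S|` matrix has rank at least `p + q - |S| ≥ k`, so it has a nonzero `k × k`
minor, which is the value at `M` of a generator of `I`. -/

open MvPolynomial

section

open Submodule Module

variable {K : Type*} [Field K]

theorem exists_strictMono_linearIndependent_of_le_finrank_span {ι V : Type*} [Finite ι]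
    [LinearOrder ι] [AddCommGroup V] [Module K V] (v : ι → V) {k : ℕ}
    (hk : k ≤ finrank K (span K (Set.range v))) :
    ∃ g : Fin k → ι, StrictMono g ∧ LinearIndependent K (v ∘ g) := by
  classical
  have := Fintype.ofFinite ι
  obtain ⟨b, -, -, hspan, hb⟩ :=
    exists_linearIndepOn_extension (linearIndepOn_empty K v) (Set.empty_subset Set.univ)
  have hcard : k ≤ b.toFinset.card := calc
    k ≤ finrank K (span K (Set.range v)) := hk
    _ ≤ finrank K (span K (Set.range fun x : b => v x)) := by
        have := FiniteDimensional.span_of_finite K (Set.finite_range fun x : b => v x)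
        rw [Set.image_univ, Set.image_eq_range] at hspan
        exact Submodule.finrank_mono (span_le.2 hspan)
    _ = b.toFinset.card := by rw [finrank_span_eq_card hb.linearIndependent, Set.toFinset_card]
  obtain ⟨t, htb, rfl⟩ := Finset.exists_subset_card_eq hcard
  refine ⟨t.orderEmbOfFin rfl, (t.orderEmbOfFin rfl).strictMono, ?_⟩
  rw [← linearIndepOn_univ_iff]
  refine (hb.mono ?_).comp_of_image (t.orderEmbOfFin rfl).injective.injOn
  simpa [Set.image_univ, Finset.range_orderEmbOfFin] using htb

theorem Fin.val_add_le_val_add_of_strictMono {k p : ℕ} {φ : Fin k → Fin p}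
    (hφ : StrictMono φ) {i j : Fin k} (hij : i ≤ j) : (j : ℕ) + φ i ≤ φ j + i := by
  have hcard : (Finset.Icc i j).card ≤ (Finset.Icc (φ i) (φ j)).card := by
    refine Finset.card_le_card_of_injOn φ (fun x hx => ?_) hφ.injective.injOn
    rw [Finset.mem_coe, Finset.mem_Icc] at hx ⊢
    exact ⟨hφ.monotone hx.1, hφ.monotone hx.2⟩
  have hφij := hφ.monotone hij
  simp only [Fin.card_Icc] at hcard
  rw [Fin.le_iff_val_le_val] at hij hφij
  omega

namespace Matrix

theorem exists_strictMono_det_submatrix_ne_zero_of_le_rank {m n : Type*} [Fintype m]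
    [LinearOrder m] [Fintype n] [LinearOrder n] (A : Matrix m n K) {k : ℕ} (hk : k ≤ A.rank) :
    ∃ r : Fin k → m, ∃ c : Fin k → n, StrictMono r ∧ StrictMono c ∧
      (A.submatrix r c).det ≠ 0 := by
  obtain ⟨r, hr, hrows⟩ :=
    exists_strictMono_linearIndependent_of_le_finrank_span A.row (A.rank_eq_finrank_span_row ▸ hk)
  have hrank : (A.submatrix r id).rank = k := by
    simpa using LinearIndependent.rank_matrix (M := A.submatrix r id) hrows
  obtain ⟨c, hc, hcols⟩ := exists_strictMono_linearIndependent_of_le_finrank_span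
    (A.submatrix r id).col (by rw [← rank_eq_finrank_span_cols, hrank])
  have hunit := linearIndependent_cols_iff_isUnit.1 hcols
  exact ⟨r, c, hr, hc, ((isUnit_iff_isUnit_det _).1 hunit).ne_zero⟩

theorem rank_le_rank_submatrix_add_card_sub {m n n₀ : Type*} [Fintype m] [Fintype n]
    [Fintype n₀] (A : Matrix m n K) {c : n₀ → n} (hc : Function.Injective c) :
    A.rank ≤ (A.submatrix id c).rank + (Fintype.card n - Fintype.card n₀) := by
  classical
  let rest : {x // x ∉ Set.range c} → m → K := fun x => A.col x
  have hspan : span K (Set.range A.col) ≤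
      span K (Set.range (A.submatrix id c).col) ⊔ span K (Set.range rest) := by
    rw [span_le]
    rintro _ ⟨x, rfl⟩
    by_cases hx : x ∈ Set.range c
    · obtain ⟨y, rfl⟩ := hx
      exact mem_sup_left (subset_span ⟨y, rfl⟩)
    · exact mem_sup_right (subset_span ⟨⟨x, hx⟩, rfl⟩)
  have hrest : finrank K (span K (Set.range rest)) ≤ Fintype.card n - Fintype.card n₀ := by
    rw [← Set.card_range_of_injective hc, ← Fintype.card_subtype_compl]
    exact finrank_range_le_card rest
  calc A.rank = finrank K (span K (Set.range A.col)) := A.rank_eq_finrank_span_cols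
    _ ≤ finrank K ↥(span K (Set.range (A.submatrix id c).col) ⊔ span K (Set.range rest)) :=
      finrank_mono hspan
    _ ≤ _ := finrank_add_le_finrank_add_finrank _ _
    _ ≤ _ := by rw [rank_eq_finrank_span_cols]; gcongr

theorem card_add_card_le_card_add_rank_submatrix_of_det_ne_zero {m m₀ n₀ : Type*} [Fintype m]
    [DecidableEq m] [Fintype m₀] [Fintype n₀] {N : Matrix m m K} (hN : N.det ≠ 0)
    {r : m₀ → m} {c : n₀ → m} (hr : Function.Injective r) (hc : Function.Injective c) :
    Fintype.card m₀ + Fintype.card n₀ ≤ Fintype.card m + (N.submatrix r c).rank := by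
  have hrows : (N.submatrix r id).rank = Fintype.card m₀ :=
    ((linearIndependent_rows_of_det_ne_zero hN).comp r hr).rank_matrix
  have hcols := (N.submatrix r id).rank_le_rank_submatrix_add_card_sub hc
  have := Fintype.card_le_of_injective c hc
  rw [hrows, submatrix_submatrix, Function.comp_id, Function.id_comp] at hcols
  omega

theorem det_submatrix_eq_zero_of_forall_nw_minor_eq_zero {p q k kX i j : ℕ}
    (M : Matrix (Fin p) (Fin q) K)
    (hM : ∀ (r : Fin k → Fin p) (c : Fin k → Fin q), StrictMono r → StrictMono c →
      (∀ t, (r t : ℕ) < i) → (∀ t, (c t : ℕ) < j) → (M.submatrix r c).det = 0)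
    {rX : Fin kX → Fin p} {cX : Fin kX → Fin q} (hrX : StrictMono rX) (hcX : StrictAnti cX)
    {φ : Fin k → Fin kX} (hφ : StrictMono φ)
    (hi : ∀ t, (rX (φ t) : ℕ) < i) (hj : ∀ t, (cX (φ t) : ℕ) < j) :
    (M.submatrix rX fun t => cX t.rev).det = 0 := by
  cases k with
  | zero =>
    -- the empty minor is `1`
    simpa using hM finZeroElim finZeroElim (fun t => t.elim0) (fun t => t.elim0)
      (fun t => t.elim0) (fun t => t.elim0)
  | succ k =>
    by_contra hdet
    have ha : (φ (Fin.last k) : ℕ) + 1 ≤ kX := (φ (Fin.last k)).isLt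
    have hb : kX - φ 0 ≤ kX := Nat.sub_le _ _
    have hrank : ((M.submatrix rX fun t => cX t.rev).submatrix
        (Fin.castLE ha) (Fin.castLE hb)).rank < k + 1 := by
      by_contra! hle
      obtain ⟨r, c, hr, hc, hminor⟩ := exists_strictMono_det_submatrix_ne_zero_of_le_rank _ hle
      refine hminor (hM _ _ (hrX.comp ((Fin.strictMono_castLE ha).comp hr))
        (hcX.comp (Fin.rev_strictAnti.comp_strictMono
          ((Fin.strictMono_castLE hb).comp hc))) (fun t => ?_) (fun t => ?_))
      · refine lt_of_le_of_lt (hrX.monotone ?_) (hi (Fin.last k))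
        rw [Fin.le_iff_val_le_val, Fin.val_castLE]
        omega
      · refine lt_of_le_of_lt (hcX.antitone ?_) (hj 0)
        rw [Fin.le_iff_val_le_val, Fin.val_rev, Fin.val_castLE]
        omega
    have hcard := card_add_card_le_card_add_rank_submatrix_of_det_ne_zero hdet
      (Fin.castLE_injective ha) (Fin.castLE_injective hb)
    have hspread := Fin.val_add_le_val_add_of_strictMono hφ (Fin.zero_le (Fin.last k))
    simp only [Fintype.card_fin, Fin.val_last, Fin.val_zero] at hcard hspread
    omega

end Matrix

theorem eval_det_submatrix_genericMatrix_s3 {R : Type*} [CommRing R] {n : ℕ} {m : Type*}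
    [Fintype m] [DecidableEq m] (M : Matrix (Fin n) (Fin n) R) (r c : m → Fin n) :
    eval (fun p => M p.1 p.2) ((genericMatrix n R).submatrix r c).det = (M.submatrix r c).det := by
  rw [RingHom.map_det]
  congr 1
  ext a b
  simp [genericMatrix]

end

/-- `(rA, cA)` encodes `A`, `(rX, cX)` encodes `S`, and `φ` picks out the cells of `B` in `S`. -/
theorem eval_antidiagDet_eq_zero_general {K : Type*} [Field K] {n : ℕ}
    (I : Ideal (MvPolynomial (Fin n × Fin n) K))
    (S : Finset (ℕ × ℕ × ℕ))
    (hI : I = nwIdeal n K S)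
    {i j k : ℕ} (hijk : (i, j, k) ∈ S)
    {kX : ℕ}
    (rA cA : Fin k → Fin n)
    (hAbox : ∀ t, (rA t : ℕ) < i ∧ (cA t : ℕ) < j)
    (rX cX : Fin kX → Fin n) (hrX : StrictMono rX) (hcX : StrictAnti cX)
    (φ : Fin k → Fin kX) (hφ : StrictMono φ)
    (hNW : ∀ t, rX (φ t) ≤ rA t ∧ cX (φ t) ≤ cA t)
    (M : Matrix (Fin n) (Fin n) K)
    (hM : ∀ f ∈ I, MvPolynomial.eval (fun p => M p.1 p.2) f = 0) :
    MvPolynomial.eval (fun p => M p.1 p.2) (antidiagDet n K rX cX) = 0 := by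
  subst hI
  rw [antidiagDet, eval_det_submatrix_genericMatrix_s3]
  refine M.det_submatrix_eq_zero_of_forall_nw_minor_eq_zero (fun r c hr hc hri hcj => ?_)
    hrX hcX hφ (fun t => lt_of_le_of_lt (hNW t).1 (hAbox t).1)
    (fun t => lt_of_le_of_lt (hNW t).2 (hAbox t).2)
  rw [← eval_det_submatrix_genericMatrix_s3]
  exact hM _ (Ideal.subset_span (Set.mem_biUnion hijk ⟨r, c, hr, hc, hri, hcj, rfl⟩))

/-- Let `K` be a field, `I` an ideal of `K[m_{a,b}]` given by northwest
rank conditions, with `(i,j,k)` one of its defining triples.  Let `A` (given by `rA, cA`)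
be an antidiagonal with `|A| = k` contained in `{1,…,i} × {1,…,j}`.  Let `X` (given by
`rX, cX`) be any antidiagonal containing a subset `B` (picked out by the strictly
increasing `φ : Fin k → Fin kX`) with `|B| = k` which is weakly northwest of `A`, i.e. the
`t`-th cell of `B` has row index at most that of the `t`-th cell of `A` and column index at
most that of the `t`-th cell of `A`.  Then `det X` vanishes at every matrix
`M ∈ K^{n×n}` at which all elements of `I` vanish. -/
theorem eval_antidiagDet_eq_zero {K : Type*} [Field K] {n : ℕ}
    (I : Ideal (MvPolynomial (Fin n × Fin n) K))
    (S : Finset (ℕ × ℕ × ℕ))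
    (hS : ∀ s ∈ S, 0 < s.1 ∧ 0 < s.2.1 ∧ 0 < s.2.2)
    (hI : I = nwIdeal n K S)
    {i j k : ℕ} (hijk : (i, j, k) ∈ S)
    {kX : ℕ}
    (rA cA : Fin k → Fin n) (hrA : StrictMono rA) (hcA : StrictAnti cA)
    (hAbox : ∀ t, (rA t : ℕ) < i ∧ (cA t : ℕ) < j)
    (rX cX : Fin kX → Fin n) (hrX : StrictMono rX) (hcX : StrictAnti cX)
    (φ : Fin k → Fin kX) (hφ : StrictMono φ)
    (hNW : ∀ t, rX (φ t) ≤ rA t ∧ cX (φ t) ≤ cA t)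
    (M : Matrix (Fin n) (Fin n) K)
    (hM : ∀ f ∈ I, MvPolynomial.eval (fun p => M p.1 p.2) f = 0) :
    MvPolynomial.eval (fun p => M p.1 p.2) (antidiagDet n K rX cX) = 0 :=
  eval_antidiagDet_eq_zero_general I S hI hijk rA cA hAbox rX cX hrX hcX φ hφ hNW M hM
end

section
/- Let K be a field and π a partial permutation of {1,...,n}. Define the diagram D(π) = {(i,j) : (π(i) is undefined or π(i) > j) and (π^{-1}(j) is undefined or π^{-1}(j) > i)} and the essential set Ess(π) = {(i,j) ∈ D(π) : (i+1,j) ∉ D(π) and (i,j+1) ∉ D(π)}. Then in K[m_{a,b} : 1 ≤ a,b ≤ n], the ideal generated by all (r(π)_{ij}+1) × (r(π)_{ij}+1) minors of the northwest i × j submatrix of the generic matrix for (i,j) ∈ Ess(π) equals the ideal I_π generated by all (r(π)_{ij}+1) × (r(π)_{ij}+1) minors of the northwest i × j submatrix over all 1 ≤ i,j ≤ n. -/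
/-!
If a cell `(i, j)` is not in the diagram, then row `i` or column `j` carries a point of `π`
inside the northwest corner ending at `(i, j)`, so the rank drops when that row or column is
removed; Laplace expansion along it puts the minors at `(i, j)` into the ideal of minors of a
smaller corner. From a cell of the diagram one moves down or right inside the diagram without
changing the rank until an essential cell is reached, and the minors of the smaller corner are
among those of the larger one.
-/

open MvPolynomial

/-- The rank matrix of a partial permutation `π` (encoded as `Fin n → Option (Fin n)`):
`r(π)_{ij} = #{a ≤ i : π a is defined and π a ≤ j}`. -/
noncomputable def prank {n : ℕ} (π : Fin n → Option (Fin n)) (i j : Fin n) : ℕ :=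
  Nat.card {a : Fin n // a ≤ i ∧ ∃ x ≤ j, π a = some x}

/-- The (Rothe) diagram of a partial permutation `π`: the cells `(i,j)` such that `π i` is
undefined or `π i > j`, and `π⁻¹ j` is undefined or `π⁻¹ j > i`. -/
def rotheDiagram {n : ℕ} (π : Fin n → Option (Fin n)) : Set (Fin n × Fin n) :=
  { p | (∀ x, π p.1 = some x → p.2 < x) ∧ (∀ a, π a = some p.2 → p.1 < a) }

/-- The essential set of a partial permutation `π`: cells `(i,j)` of the diagram such that
neither `(i+1,j)` nor `(i,j+1)` lies in the diagram. -/
def essentialSet {n : ℕ} (π : Fin n → Option (Fin n)) : Set (Fin n × Fin n) :=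
  { p | p ∈ rotheDiagram π ∧
    (∀ i' : Fin n, (i' : ℕ) = (p.1 : ℕ) + 1 → (i', p.2) ∉ rotheDiagram π) ∧
    (∀ j' : Fin n, (j' : ℕ) = (p.2 : ℕ) + 1 → (p.1, j') ∉ rotheDiagram π) }

section nwMinors

variable {n : ℕ} {K : Type*} [CommRing K]

theorem nwMinors_mono {I J I' J' k : ℕ} (hI : I ≤ I') (hJ : J ≤ J') :
    nwMinors n K I J k ⊆ nwMinors n K I' J' k := by
  rintro f ⟨r, c, hr, hc, hrI, hcJ, rfl⟩
  exact ⟨r, c, hr, hc, fun t => (hrI t).trans_le hI, fun t => (hcJ t).trans_le hJ, rfl⟩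

theorem nwMinors_zero_left (J k : ℕ) : nwMinors n K 0 J (k + 1) = ∅ := by
  rw [Set.eq_empty_iff_forall_notMem]
  rintro f ⟨r, -, -, -, hr, -⟩
  exact Nat.not_lt_zero _ (hr 0)

theorem nwMinors_zero_right (I k : ℕ) : nwMinors n K I 0 (k + 1) = ∅ := by
  rw [Set.eq_empty_iff_forall_notMem]
  rintro f ⟨-, c, -, -, -, hc, -⟩
  exact Nat.not_lt_zero _ (hc 0)

/-- Only the last row of such a minor can be row `I`, so expand along it. -/
theorem nwMinors_succ_left_subset_span {I J k : ℕ} :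
    nwMinors n K (I + 1) J (k + 1) ⊆ Ideal.span (nwMinors n K I J k) := by
  rintro f ⟨r, c, hr, hc, hrI, hcJ, rfl⟩
  rw [Matrix.det_succ_row _ (Fin.last k)]
  refine Ideal.sum_mem _ fun j _ => Ideal.mul_mem_left _ _ (Ideal.subset_span ?_)
  rw [Fin.succAbove_last, Matrix.submatrix_submatrix]
  refine ⟨r ∘ Fin.castSucc, c ∘ j.succAbove, hr.comp Fin.strictMono_castSucc,
    hc.comp (Fin.strictMono_succAbove j), fun t => ?_, fun t => hcJ _, rfl⟩
  have := hr (Fin.castSucc_lt_last t)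
  have := hrI (Fin.last k)
  simp only [Function.comp_apply, Fin.lt_def] at *
  omega

theorem nwMinors_succ_right_subset_span {I J k : ℕ} :
    nwMinors n K I (J + 1) (k + 1) ⊆ Ideal.span (nwMinors n K I J k) := by
  rintro f ⟨r, c, hr, hc, hrI, hcJ, rfl⟩
  rw [Matrix.det_succ_column _ (Fin.last k)]
  refine Ideal.sum_mem _ fun i _ => Ideal.mul_mem_left _ _ (Ideal.subset_span ?_)
  rw [Fin.succAbove_last, Matrix.submatrix_submatrix]
  refine ⟨r ∘ i.succAbove, c ∘ Fin.castSucc, hr.comp (Fin.strictMono_succAbove i),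
    hc.comp Fin.strictMono_castSucc, fun t => hrI _, fun t => ?_, rfl⟩
  have := hc (Fin.castSucc_lt_last t)
  have := hcJ (Fin.last k)
  simp only [Function.comp_apply, Fin.lt_def] at *
  omega

theorem span_nwMinors_antitone {I J k k' : ℕ} (h : k ≤ k') :
    Ideal.span (nwMinors n K I J k') ≤ Ideal.span (nwMinors n K I J k) := by
  induction k', h using Nat.le_induction with
  | base => exact le_rfl
  | succ k' _ ih =>
    refine (Ideal.span_le.2 ?_).trans ih
    exact (nwMinors_mono (Nat.le_succ I) le_rfl).trans nwMinors_succ_left_subset_span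

theorem span_nwMinors_succ_left_le {I J k k' : ℕ} (h : k ≤ k') :
    Ideal.span (nwMinors n K (I + 1) J (k' + 1)) ≤ Ideal.span (nwMinors n K I J k) :=
  Ideal.span_le.2 (nwMinors_succ_left_subset_span.trans (span_nwMinors_antitone h))

theorem span_nwMinors_succ_right_le {I J k k' : ℕ} (h : k ≤ k') :
    Ideal.span (nwMinors n K I (J + 1) (k' + 1)) ≤ Ideal.span (nwMinors n K I J k) :=
  Ideal.span_le.2 (nwMinors_succ_right_subset_span.trans (span_nwMinors_antitone h))

end nwMinors

section nwRank

variable {n : ℕ} (π : Fin n → Option (Fin n))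

/-- Indexed by the size of the corner rather than by its last cell, so that empty corners
(`I = 0` or `J = 0`) need no special case. -/
def nwRank (I J : ℕ) : ℕ :=
  (Finset.univ.filter fun a : Fin n => (a : ℕ) < I ∧ ∃ x : Fin n, π a = some x ∧ (x : ℕ) < J).card

theorem prank_eq_nwRank (i j : Fin n) : prank π i j = nwRank π (i + 1) (j + 1) := by
  rw [prank, Nat.card_eq_fintype_card, Fintype.card_subtype, nwRank]
  congr 1
  ext a
  simp only [Finset.mem_filter, Finset.mem_univ, true_and, Fin.le_def]
  constructor
  · rintro ⟨ha, x, hx, hπa⟩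
    exact ⟨by omega, x, hπa, by omega⟩
  · rintro ⟨ha, x, hπa, hx⟩
    exact ⟨by omega, x, by omega, hπa⟩

theorem nwRank_succ_left_of_forall {i : Fin n} {J : ℕ} (h : ∀ x, π i = some x → J ≤ x) :
    nwRank π (i + 1) J = nwRank π i J := by
  unfold nwRank
  congr 1
  ext a
  simp only [Finset.mem_filter, Finset.mem_univ, true_and]
  constructor
  · rintro ⟨ha, x, hπa, hx⟩
    rcases (Nat.lt_succ_iff_lt_or_eq.1 ha) with ha | ha
    · exact ⟨ha, x, hπa, hx⟩
    · cases Fin.ext ha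
      exact absurd (h x hπa) (by omega)
  · rintro ⟨ha, hx⟩
    exact ⟨by omega, hx⟩

theorem nwRank_succ_right_of_forall {I : ℕ} {j : Fin n} (h : ∀ a, π a = some j → I ≤ a) :
    nwRank π I (j + 1) = nwRank π I j := by
  unfold nwRank
  congr 1
  ext a
  simp only [Finset.mem_filter, Finset.mem_univ, true_and]
  constructor
  · rintro ⟨ha, x, hπa, hx⟩
    rcases (Nat.lt_succ_iff_lt_or_eq.1 hx) with hx | hx
    · exact ⟨ha, x, hπa, hx⟩
    · cases Fin.ext hx
      exact absurd (h a hπa) (by omega)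
  · rintro ⟨ha, x, hπa, hx⟩
    exact ⟨ha, x, hπa, by omega⟩

theorem nwRank_lt_succ_left {i x : Fin n} {J : ℕ} (hπi : π i = some x) (hx : (x : ℕ) < J) :
    nwRank π i J < nwRank π (i + 1) J := by
  refine Finset.card_lt_card (Finset.ssubset_iff_of_subset (fun a => ?_) |>.2 ⟨i, ?_, ?_⟩)
  · simp only [Finset.mem_filter, Finset.mem_univ, true_and]
    exact fun ⟨ha, hx⟩ => ⟨by omega, hx⟩
  · simpa using ⟨x, hπi, hx⟩
  · simp

theorem nwRank_lt_succ_right {a j : Fin n} {I : ℕ} (hπa : π a = some j) (ha : (a : ℕ) < I) :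
    nwRank π I j < nwRank π I (j + 1) := by
  refine Finset.card_lt_card (Finset.ssubset_iff_of_subset (fun b => ?_) |>.2 ⟨a, ?_, ?_⟩)
  · simp only [Finset.mem_filter, Finset.mem_univ, true_and]
    exact fun ⟨hb, x, hπb, hx⟩ => ⟨hb, x, hπb, by omega⟩
  · simpa using ⟨ha, j, hπa, by omega⟩
  · simp [hπa]

end nwRank

section essentialSet

variable {n : ℕ} (K : Type*) [CommRing K] (π : Fin n → Option (Fin n))

noncomputable def essentialMinorIdeal : Ideal (MvPolynomial (Fin n × Fin n) K) :=
  Ideal.span (⋃ p ∈ essentialSet π,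
    nwMinors n K ((p.1 : ℕ) + 1) ((p.2 : ℕ) + 1) (prank π p.1 p.2 + 1))

variable {K π}

theorem nwMinors_subset_essentialMinorIdeal_of_mem_rotheDiagram {i j : Fin n}
    (hD : (i, j) ∈ rotheDiagram π) :
    nwMinors n K (i + 1) (j + 1) (nwRank π (i + 1) (j + 1) + 1) ⊆ essentialMinorIdeal K π := by
  by_cases hE : (i, j) ∈ essentialSet π
  · rw [← prank_eq_nwRank]
    exact (Set.subset_biUnion_of_mem (u := fun p : Fin n × Fin n =>
      nwMinors n K ((p.1 : ℕ) + 1) ((p.2 : ℕ) + 1) (prank π p.1 p.2 + 1)) hE).trans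
      Ideal.subset_span
  · obtain ⟨i', hi', hD'⟩ | ⟨j', hj', hD'⟩ :
        (∃ i' : Fin n, (i' : ℕ) = i + 1 ∧ (i', j) ∈ rotheDiagram π) ∨
          ∃ j' : Fin n, (j' : ℕ) = j + 1 ∧ (i, j') ∈ rotheDiagram π := by
      simpa [essentialSet, hD, or_iff_not_imp_left] using hE
    · have hrank : nwRank π (i' + 1) (j + 1) = nwRank π (i + 1) (j + 1) := by
        rw [nwRank_succ_left_of_forall π hD'.1, hi']
      refine (nwMinors_mono (I' := i' + 1) (by omega) le_rfl).trans ?_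
      rw [← hrank]
      exact nwMinors_subset_essentialMinorIdeal_of_mem_rotheDiagram hD'
    · have hrank : nwRank π (i + 1) (j' + 1) = nwRank π (i + 1) (j + 1) := by
        rw [nwRank_succ_right_of_forall π hD'.2, hj']
      refine (nwMinors_mono (J' := j' + 1) le_rfl (by omega)).trans ?_
      rw [← hrank]
      exact nwMinors_subset_essentialMinorIdeal_of_mem_rotheDiagram hD'
termination_by (n - i) + (n - j)

theorem nwMinors_subset_essentialMinorIdeal :
    ∀ {I J : ℕ}, I ≤ n → J ≤ n →
      nwMinors n K I J (nwRank π I J + 1) ⊆ essentialMinorIdeal K π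
  | 0, J, _, _ => by simp [nwMinors_zero_left]
  | I + 1, 0, _, _ => by simp [nwMinors_zero_right]
  | i + 1, j + 1, hi, hj => by
    obtain ⟨a, rfl⟩ : ∃ a : Fin n, (a : ℕ) = i := ⟨⟨i, hi⟩, rfl⟩
    obtain ⟨b, rfl⟩ : ∃ b : Fin n, (b : ℕ) = j := ⟨⟨j, hj⟩, rfl⟩
    by_cases hD : (a, b) ∈ rotheDiagram π
    · exact nwMinors_subset_essentialMinorIdeal_of_mem_rotheDiagram hD
    obtain ⟨x, hπa, hx⟩ | ⟨c, hπc, hc⟩ :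
        (∃ x, π a = some x ∧ x ≤ b) ∨ ∃ c, π c = some b ∧ c ≤ a := by
      simpa only [rotheDiagram, Set.mem_ofPred_eq, not_and_or, not_forall, not_lt, exists_prop]
        using hD
    · refine Ideal.subset_span.trans ((span_nwMinors_succ_left_le
        (nwRank_lt_succ_left π hπa (Nat.lt_succ_of_le hx))).trans ?_)
      exact Ideal.span_le.2 (nwMinors_subset_essentialMinorIdeal (Nat.le_of_succ_le hi) hj)
    · refine Ideal.subset_span.trans ((span_nwMinors_succ_right_le
        (nwRank_lt_succ_right π hπc (Nat.lt_succ_of_le hc))).trans ?_)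
      exact Ideal.span_le.2 (nwMinors_subset_essentialMinorIdeal hi (Nat.le_of_succ_le hj))
termination_by I J => I + J

end essentialSet

theorem essentialSet_span_eq_general {K : Type*} [Field K] {n : ℕ}
    (π : Fin n → Option (Fin n)) :
    Ideal.span (⋃ p ∈ essentialSet π,
        nwMinors n K ((p.1 : ℕ) + 1) ((p.2 : ℕ) + 1) (prank π p.1 p.2 + 1)) =
      Ideal.span (⋃ (i : Fin n), ⋃ (j : Fin n),
        nwMinors n K ((i : ℕ) + 1) ((j : ℕ) + 1) (prank π i j + 1)) := by
  refine le_antisymm (Ideal.span_mono ?_) (Ideal.span_le.2 ?_)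
  · exact Set.iUnion₂_subset fun p _ => Set.subset_iUnion₂ (s := fun (i j : Fin n) =>
      nwMinors n K ((i : ℕ) + 1) ((j : ℕ) + 1) (prank π i j + 1)) p.1 p.2
  · refine Set.iUnion₂_subset fun i j => ?_
    rw [prank_eq_nwRank]
    exact nwMinors_subset_essentialMinorIdeal i.2 j.2

/-- Let `K` be a field and `π` a partial permutation of `{1,…,n}`.
The ideal generated by the `(r(π)_{ij}+1) × (r(π)_{ij}+1)` minors of the northwest
`i × j` submatrices of the generic matrix for `(i,j)` ranging over the essential set of
`π` equals the ideal `I_π` generated by these minors over all `1 ≤ i,j ≤ n`. -/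
theorem essentialSet_span_eq {K : Type*} [Field K] {n : ℕ}
    (π : Fin n → Option (Fin n))
    (hπ : ∀ a b x, π a = some x → π b = some x → a = b) :
    Ideal.span (⋃ p ∈ essentialSet π,
        nwMinors n K ((p.1 : ℕ) + 1) ((p.2 : ℕ) + 1) (prank π p.1 p.2 + 1)) =
      Ideal.span (⋃ (i : Fin n), ⋃ (j : Fin n),
        nwMinors n K ((i : ℕ) + 1) ((j : ℕ) + 1) (prank π i j + 1)) :=
  essentialSet_span_eq_general π
end
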